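/- arXiv:2504.11943 — 9 statements merged into one kernel-verified Lean document; each statement's English description precedes it below -/
import Mathlib

section
/- Modeling a sum of cycles as a function A : ℕ≥1 → ℕ of finite support (A(ℓ) = number of cycles of length ℓ), the product AX satisfies, for every ℓ ≥ 1: (AX)(ℓ) = (1/ℓ) · Σ over pairs (a,x) with lcm(a,x)=ℓ of a·A(a)·x·X(x). In particular this sum is divisible by ℓ. -/
/-- A sum of cycles has all cycle lengths positive. -/
def Pos (A : ℕ →₀ ℕ) : Prop := ∀ a ∈ A.support, 0 < a

/-- The single cycle of length `n`. -/
noncomputable def Cyc (n : ℕ) : ℕ →₀ ℕ := Finsupp.single n 1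

/-- Product of sums of cycles: `C_a · C_x = gcd(a,x) C_{lcm(a,x)}`, extended by distributivity. -/
noncomputable def cmul (A X : ℕ →₀ ℕ) : ℕ →₀ ℕ :=
  A.sum fun a m => X.sum fun x n => (m * n * Nat.gcd a x) • Finsupp.single (Nat.lcm a x) 1

/-- Number of vertices of a sum of cycles. -/
def size (A : ℕ →₀ ℕ) : ℕ := A.sum fun ℓ m => ℓ * m

/-- The support `L(A,B)` of an instance. -/
def instSupp (A B : ℕ →₀ ℕ) : Set ℕ :=
  {x | 0 < x ∧ x ≤ size B / size A ∧ ∀ a ∈ A.support, Nat.lcm a x ∈ B.support}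

/-- Consistency: `L(A) ∨ L(A,B) = L(B)`. -/
def Consistent (A B : ℕ →₀ ℕ) : Prop :=
  {ℓ | ∃ a ∈ A.support, ∃ x ∈ instSupp A B, Nat.lcm a x = ℓ} = ↑B.support

/-- Cycle length multiplication `A ⊗ p`. -/
noncomputable def otimes (A : ℕ →₀ ℕ) (p : ℕ) : ℕ →₀ ℕ :=
  A.mapDomain (fun a => p * a)

/-- Cycle length division `A ⊘ p`: `(A ⊘ p)(a) = A (p*a)`. -/
noncomputable def oslash (A : ℕ →₀ ℕ) (p : ℕ) : ℕ →₀ ℕ :=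
  if hp : p = 0 then 0 else
    Finsupp.comapDomain (fun a => p * a) A ((mul_right_injective₀ hp).injOn)

/-- Contraction `A ⊟ p`: each cycle of length `p*a` becomes `p` cycles of length `a`. -/
noncomputable def contract (A : ℕ →₀ ℕ) (p : ℕ) : ℕ →₀ ℕ :=
  A.filter (fun a => ¬ p ∣ a) + p • oslash A p

theorem cmul_apply_eq (A X : ℕ →₀ ℕ) (hA : Pos A) (hX : Pos X) (ℓ : ℕ) (hℓ : 1 ≤ ℓ) :
    ℓ ∣ (∑ p ∈ (A.support ×ˢ X.support).filter (fun p => Nat.lcm p.1 p.2 = ℓ),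
          p.1 * A p.1 * p.2 * X p.2) ∧
    cmul A X ℓ =
      (∑ p ∈ (A.support ×ˢ X.support).filter (fun p => Nat.lcm p.1 p.2 = ℓ),
          p.1 * A p.1 * p.2 * X p.2) / ℓ := by
  classical
  set S := (A.support ×ˢ X.support).filter (fun p => Nat.lcm p.1 p.2 = ℓ) with hS
  have key : ∀ p ∈ S, p.1 * A p.1 * p.2 * X p.2 = ℓ * (A p.1 * X p.2 * Nat.gcd p.1 p.2) := by
    rintro ⟨a, x⟩ hp
    simp only [hS, Finset.mem_filter, Finset.mem_product] at hp
    have h := Nat.gcd_mul_lcm a x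
    rw [hp.2] at h
    calc a * A a * x * X x = (a * x) * (A a * X x) := by ring
      _ = (Nat.gcd a x * ℓ) * (A a * X x) := by rw [h]
      _ = ℓ * (A a * X x * Nat.gcd a x) := by ring
  have hsum : (∑ p ∈ S, p.1 * A p.1 * p.2 * X p.2)
      = ℓ * ∑ p ∈ S, A p.1 * X p.2 * Nat.gcd p.1 p.2 := by
    rw [Finset.mul_sum]; exact Finset.sum_congr rfl key
  refine ⟨hsum ▸ Dvd.intro _ rfl, ?_⟩
  rw [hsum, Nat.mul_div_cancel_left _ (by omega)]
  -- now compute cmul A X ℓ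
  rw [cmul, Finsupp.sum, Finsupp.finset_sum_apply]
  have : ∀ a ∈ A.support,
      (X.sum fun x n => (A a * n * Nat.gcd a x) • Finsupp.single (Nat.lcm a x) 1) ℓ
      = ∑ x ∈ X.support, if Nat.lcm a x = ℓ then A a * X x * Nat.gcd a x else 0 := by
    intro a _
    rw [Finsupp.sum, Finsupp.finset_sum_apply]
    refine Finset.sum_congr rfl fun x _ => ?_
    rw [Finsupp.smul_apply, Finsupp.single_apply]
    split <;> simp [*]
  rw [Finset.sum_congr rfl this, hS, Finset.sum_filter, Finset.sum_product]
end

section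
/- If A, B, X are sums of cycles with AX = B and A, B nonempty, then |A| divides |B|, |X| = |B|/|A|, and every element of L(X) divides some element of L(B). -/
/-! Since `gcd a x * lcm a x = a * x`, the product `C_a · C_x` has `a * x` vertices, so `size` is
multiplicative. For `a ∈ L(A)` and `x ∈ L(X)`, the term `C_a · C_x` contributes `gcd a x > 0` cycles of
length `lcm a x` to `AX = B`, and `x ∣ lcm a x`. -/

noncomputable def sizeAddHom : (ℕ →₀ ℕ) →+ ℕ :=
  Finsupp.liftAddHom fun ℓ => AddMonoidHom.mulLeft ℓ

lemma sizeAddHom_apply (A : ℕ →₀ ℕ) : sizeAddHom A = size A := by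
  simp [sizeAddHom, size, AddMonoidHom.mulLeft]

lemma size_finsuppSum {α M : Type*} [Zero M] (f : α →₀ M) (g : α → M → ℕ →₀ ℕ) :
    size (f.sum g) = f.sum fun a m => size (g a m) := by
  simp only [← sizeAddHom_apply, map_finsuppSum]

lemma size_smul_single (k ℓ : ℕ) : size (k • Finsupp.single ℓ 1) = ℓ * k := by
  simp [size, Finsupp.smul_single]

lemma size_cmul (A X : ℕ →₀ ℕ) : size (cmul A X) = size A * size X := by
  simp only [cmul, size_finsuppSum, size_smul_single]
  rw [size, size, Finsupp.sum_mul]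
  simp only [Finsupp.mul_sum]
  refine Finsupp.sum_congr fun a _ => Finsupp.sum_congr fun x _ => ?_
  calc Nat.lcm a x * (A a * X x * Nat.gcd a x)
      = (Nat.gcd a x * Nat.lcm a x) * (A a * X x) := by ring
    _ = a * A a * (x * X x) := by rw [Nat.gcd_mul_lcm]; ring

lemma size_pos {A : ℕ →₀ ℕ} (hA : Pos A) (hAne : A ≠ 0) : 0 < size A := by
  obtain ⟨a, ha⟩ := Finsupp.support_nonempty_iff.2 hAne
  calc 0 < a * A a := Nat.mul_pos (hA a ha) (Nat.pos_of_ne_zero (Finsupp.mem_support_iff.1 ha))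
    _ ≤ size A := Finset.single_le_sum (f := fun ℓ => ℓ * A ℓ) (fun _ _ => Nat.zero_le _) ha

lemma mul_mul_gcd_le_cmul_apply_lcm (A X : ℕ →₀ ℕ) (a x : ℕ) :
    A a * X x * Nat.gcd a x ≤ cmul A X (Nat.lcm a x) := by
  by_cases hax : a ∈ A.support ∧ x ∈ X.support
  swap
  · rw [not_and_or, Finsupp.notMem_support_iff, Finsupp.notMem_support_iff] at hax
    rcases hax with h | h <;> simp [h]
  simp only [cmul, Finsupp.sum, Finsupp.finsetSum_apply]
  refine le_trans ?_ (Finset.single_le_sum (fun _ _ => Nat.zero_le _) hax.1)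
  refine le_trans ?_ (Finset.single_le_sum (fun _ _ => Nat.zero_le _) hax.2)
  simp

lemma lcm_mem_support_cmul {A X : ℕ →₀ ℕ} {a x : ℕ} (ha : a ∈ A.support) (hx : x ∈ X.support)
    (ha_pos : 0 < a) : Nat.lcm a x ∈ (cmul A X).support := by
  rw [Finsupp.mem_support_iff, ← Nat.pos_iff_ne_zero]
  refine lt_of_lt_of_le ?_ (mul_mul_gcd_le_cmul_apply_lcm A X a x)
  have := Nat.gcd_pos_of_pos_left x ha_pos
  simp only [Finsupp.mem_support_iff] at ha hx
  positivity

theorem div_of_cmul_eq_general (A B X : ℕ →₀ ℕ) (hA : Pos A) (hAne : A ≠ 0)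
    (h : cmul A X = B) :
    size A ∣ size B ∧ size X = size B / size A ∧
      ∀ x ∈ X.support, ∃ b ∈ B.support, x ∣ b := by
  have hsize : size B = size A * size X := by rw [← h, size_cmul]
  refine ⟨⟨size X, hsize⟩, by rw [hsize, Nat.mul_div_cancel_left _ (size_pos hA hAne)], ?_⟩
  intro x hx
  obtain ⟨a, ha⟩ := Finsupp.support_nonempty_iff.2 hAne
  exact ⟨Nat.lcm a x, h ▸ lcm_mem_support_cmul ha hx (hA a ha), Nat.dvd_lcm_right a x⟩

theorem div_of_cmul_eq (A B X : ℕ →₀ ℕ) (hA : Pos A) (hB : Pos B) (hX : Pos X)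
    (hAne : A ≠ 0) (hBne : B ≠ 0) (h : cmul A X = B) :
    size A ∣ size B ∧ size X = size B / size A ∧
      ∀ x ∈ X.support, ∃ b ∈ B.support, x ∣ b :=
  div_of_cmul_eq_general A B X hA hAne h
end

section
/- If AX = B for nonempty sums of cycles, then L(X) ⊆ L(A,B), where L(A,B) is the set of positive integers x ≤ |B|/|A| such that lcm(a,x) ∈ L(B) for every a ∈ L(A). -/
lemma size_single (n c : ℕ) : size (Finsupp.single n c) = n * c := by
  simp [size, Finsupp.sum_single_index]

lemma sizeHom_apply : ∀ f : ℕ →₀ ℕ, size f = f.sum fun ℓ m => ℓ * m := fun _ => rfl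

noncomputable def sizeHom : (ℕ →₀ ℕ) →+ ℕ where
  toFun := size
  map_zero' := by simp [size]
  map_add' := fun f g => Finsupp.sum_add_index (by simp) (by intros; ring)

lemma le_size {X : ℕ →₀ ℕ} {x : ℕ} (hx : x ∈ X.support) : x ≤ size X := by
  have h1 : 1 ≤ X x := Nat.one_le_iff_ne_zero.2 (Finsupp.mem_support_iff.1 hx)
  calc x = x * 1 := (mul_one x).symm
    _ ≤ x * X x := Nat.mul_le_mul_left x h1
    _ ≤ size X := Finset.single_le_sum (f := fun i => i * X i) (fun i _ => Nat.zero_le _) hx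

lemma one_le_size {A : ℕ →₀ ℕ} (hA : Pos A) (hAne : A ≠ 0) : 1 ≤ size A := by
  obtain ⟨a, ha⟩ := Finsupp.support_nonempty_iff.2 hAne
  have := le_size ha
  have := hA a ha
  omega

theorem support_subset_instSupp (A B X : ℕ →₀ ℕ) (hA : Pos A) (hB : Pos B) (hX : Pos X)
    (hAne : A ≠ 0) (hBne : B ≠ 0) (h : cmul A X = B) :
    ↑X.support ⊆ instSupp A B := by
  intro x hx
  have hx' : x ∈ X.support := hx
  have hsize : size B = size A * size X := by rw [← h, size_cmul]
  have hApos : 1 ≤ size A := one_le_size hA hAne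
  refine ⟨hX x hx', ?_, ?_⟩
  · rw [hsize, Nat.mul_div_cancel_left _ hApos]
    exact le_size hx'
  · intro a ha
    rw [Finsupp.mem_support_iff, ← h]
    have : 0 < (cmul A X) (Nat.lcm a x) := by
      unfold cmul
      rw [Finsupp.sum_apply]
      apply Finset.sum_pos' (fun i _ => Nat.zero_le _)
      refine ⟨a, ha, ?_⟩
      dsimp only
      rw [Finsupp.sum_apply]
      apply Finset.sum_pos' (fun i _ => Nat.zero_le _)
      refine ⟨x, hx', ?_⟩
      dsimp only
      rw [Finsupp.smul_apply, Finsupp.single_apply, if_pos rfl, smul_eq_mul, mul_one]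
      have h1 : 0 < A a := Nat.pos_of_ne_zero (Finsupp.mem_support_iff.1 ha)
      have h2 : 0 < X x := Nat.pos_of_ne_zero (Finsupp.mem_support_iff.1 hx')
      have h3 : 0 < Nat.gcd a x := Nat.gcd_pos_of_pos_left _ (hA a ha)
      positivity
    omega
end

section
/- Let p be a prime and let A, X be sums of cycles such that p divides every element of L(X). Then (A⊟p)·(X⊘p) = (A·X)⊘p, where A⊟p is the contraction of A by p. -/
/-! Both sides are additive in `A` and in `X ⊘ p`, and since every cycle length of `X` is a
multiple of `p`, `X = (X ⊘ p) ⊗ p`. It therefore suffices to check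
`(C_a ⊟ p) · C_y = (C_a · C_{py}) ⊘ p` for single cycles. If `a = p b`, both sides equal
`p gcd(b, y) C_{lcm(b, y)}`; if `p ∤ a`, then `gcd(a, p y) = gcd(a, y)` and
`lcm(a, p y) = p lcm(a, y)`, so both sides equal `gcd(a, y) C_{lcm(a, y)}`. -/

section cycles

variable {p : ℕ}

theorem oslash_apply (hp : p ≠ 0) (A : ℕ →₀ ℕ) (c : ℕ) : oslash A p c = A (p * c) := by
  simp [oslash, hp]

theorem oslash_zero (hp : p ≠ 0) : oslash 0 p = 0 := by
  ext c; simp [oslash_apply hp]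

theorem oslash_add (hp : p ≠ 0) (A B : ℕ →₀ ℕ) :
    oslash (A + B) p = oslash A p + oslash B p := by
  ext c; simp [oslash_apply hp]

theorem oslash_smul (hp : p ≠ 0) (k : ℕ) (A : ℕ →₀ ℕ) : oslash (k • A) p = k • oslash A p := by
  ext c; simp [oslash_apply hp]

theorem oslash_single_mul (hp : p ≠ 0) (b m : ℕ) :
    oslash (Finsupp.single (p * b) m) p = Finsupp.single b m := by
  ext c; simp [oslash_apply hp, Finsupp.single_apply, hp]

theorem oslash_single_of_not_dvd (hp : p ≠ 0) {a : ℕ} (ha : ¬ p ∣ a) (m : ℕ) :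
    oslash (Finsupp.single a m) p = 0 := by
  ext c
  rw [oslash_apply hp, Finsupp.single_eq_of_ne]
  · rfl
  · rintro rfl; exact ha (dvd_mul_right p c)

theorem otimes_oslash_of_forall_dvd (hp : p ≠ 0) {X : ℕ →₀ ℕ} (hX : ∀ x ∈ X.support, p ∣ x) :
    otimes (oslash X p) p = X := by
  ext x
  by_cases hx : p ∣ x
  · obtain ⟨c, rfl⟩ := hx
    rw [otimes, Finsupp.mapDomain_apply (mul_right_injective₀ hp), oslash_apply hp]
  · rw [otimes, Finsupp.mapDomain_of_notMem_range, eq_comm, ← Finsupp.notMem_support_iff]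
    · exact fun hxX => hx (hX x hxX)
    · rintro ⟨c, rfl⟩; exact hx (dvd_mul_right p c)

theorem contract_zero (hp : p ≠ 0) : contract 0 p = 0 := by
  rw [contract, Finsupp.filter_zero, oslash_zero hp, smul_zero, add_zero]

theorem contract_add (hp : p ≠ 0) (A B : ℕ →₀ ℕ) :
    contract (A + B) p = contract A p + contract B p := by
  simp only [contract, Finsupp.filter_add, oslash_add hp, smul_add]
  abel

theorem contract_single_mul (hp : p ≠ 0) (b m : ℕ) :
    contract (Finsupp.single (p * b) m) p = Finsupp.single b (p * m) := by
  rw [contract, Finsupp.filter_single_of_neg (fun a => ¬ p ∣ a) (not_not.mpr (dvd_mul_right p b)),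
    oslash_single_mul hp, Finsupp.smul_single, zero_add, smul_eq_mul]

theorem contract_single_of_not_dvd (hp : p ≠ 0) {a : ℕ} (ha : ¬ p ∣ a) (m : ℕ) :
    contract (Finsupp.single a m) p = Finsupp.single a m := by
  rw [contract, Finsupp.filter_single_of_pos (fun a => ¬ p ∣ a) ha,
    oslash_single_of_not_dvd hp ha, smul_zero, add_zero]

theorem cmul_single_single (a m x n : ℕ) :
    cmul (Finsupp.single a m) (Finsupp.single x n) =
      (m * n * Nat.gcd a x) • Finsupp.single (Nat.lcm a x) 1 := by
  simp [cmul]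

theorem cmul_zero_left (X : ℕ →₀ ℕ) : cmul 0 X = 0 := by
  simp [cmul]

theorem cmul_zero_right (A : ℕ →₀ ℕ) : cmul A 0 = 0 := by
  simp [cmul]

theorem cmul_add_left (A B X : ℕ →₀ ℕ) : cmul (A + B) X = cmul A X + cmul B X := by
  unfold cmul
  apply Finsupp.sum_add_index <;> intros <;> simp [add_mul, Finsupp.sum_add]

theorem cmul_add_right (A X Y : ℕ →₀ ℕ) : cmul A (X + Y) = cmul A X + cmul A Y := by
  unfold cmul
  rw [← Finsupp.sum_add]
  refine Finsupp.sum_congr fun a _ => ?_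
  apply Finsupp.sum_add_index <;> intros <;> simp [mul_add, add_mul]

theorem Nat.lcm_mul_right_of_coprime {p a : ℕ} (h : Nat.Coprime p a) (y : ℕ) :
    Nat.lcm a (p * y) = p * Nat.lcm a y := by
  rw [mul_comm p y, Nat.lcm_mul_left_right_eq_mul_of_lcm_eq_mul h.symm.lcm_eq_mul, mul_comm]

theorem cmul_contract_single_single (hp : p.Prime) (a m y n : ℕ) :
    cmul (contract (Finsupp.single a m) p) (Finsupp.single y n) =
      oslash (cmul (Finsupp.single a m) (Finsupp.single (p * y) n)) p := by
  have hp0 := hp.ne_zero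
  by_cases hpa : p ∣ a
  · obtain ⟨b, rfl⟩ := hpa
    rw [contract_single_mul hp0, cmul_single_single, cmul_single_single, Nat.lcm_mul_left,
      Nat.gcd_mul_left, oslash_smul hp0, oslash_single_mul hp0]
    ring_nf
  · have hcop : Nat.Coprime p a := hp.coprime_iff_not_dvd.mpr hpa
    rw [contract_single_of_not_dvd hp0 hpa, cmul_single_single, cmul_single_single,
      hcop.gcd_mul_left_cancel_right, Nat.lcm_mul_right_of_coprime hcop, oslash_smul hp0,
      oslash_single_mul hp0]

theorem cmul_contract_single (hp : p.Prime) (a m : ℕ) (Y : ℕ →₀ ℕ) :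
    cmul (contract (Finsupp.single a m) p) Y =
      oslash (cmul (Finsupp.single a m) (otimes Y p)) p := by
  induction Y using Finsupp.induction with
  | zero => simp only [otimes, Finsupp.mapDomain_zero, cmul_zero_right, oslash_zero hp.ne_zero]
  | single_add y n Y _ _ ih =>
    have hY : otimes (Finsupp.single y n + Y) p = Finsupp.single (p * y) n + otimes Y p := by
      rw [otimes, Finsupp.mapDomain_add, Finsupp.mapDomain_single, otimes]
    rw [hY, cmul_add_right, cmul_add_right, oslash_add hp.ne_zero, ih,
      cmul_contract_single_single hp]

theorem cmul_contract (hp : p.Prime) (A Y : ℕ →₀ ℕ) :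
    cmul (contract A p) Y = oslash (cmul A (otimes Y p)) p := by
  induction A using Finsupp.induction with
  | zero => rw [contract_zero hp.ne_zero, cmul_zero_left, cmul_zero_left, oslash_zero hp.ne_zero]
  | single_add a m A _ _ ih =>
    rw [contract_add hp.ne_zero, cmul_add_left, cmul_add_left, oslash_add hp.ne_zero, ih,
      cmul_contract_single hp]

end cycles

theorem contract_cmul_oslash_general (A X : ℕ →₀ ℕ)
    (p : ℕ) (hp : p.Prime) (hdvd : ∀ x ∈ X.support, p ∣ x) :
    cmul (contract A p) (oslash X p) = oslash (cmul A X) p := by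
  rw [cmul_contract hp, otimes_oslash_of_forall_dvd hp.ne_zero hdvd]

theorem contract_cmul_oslash (A X : ℕ →₀ ℕ) (hA : Pos A) (hX : Pos X)
    (p : ℕ) (hp : p.Prime) (hdvd : ∀ x ∈ X.support, p ∣ x) :
    cmul (contract A p) (oslash X p) = oslash (cmul A X) p :=
  contract_cmul_oslash_general A X p hp hdvd
end

section
/- For any sum of cycles A and primes p, q, contraction commutes: (A⊟p)⊟q = (A⊟q)⊟p. -/
lemma contract_apply (A : ℕ →₀ ℕ) {p : ℕ} (hp : p ≠ 0) (a : ℕ) :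
    contract A p a = (if p ∣ a then 0 else A a) + p * A (p * a) := by
  rw [contract, Finsupp.add_apply, Finsupp.filter_apply, Finsupp.smul_apply, oslash, dif_neg hp,
    Finsupp.comapDomain_apply]
  by_cases h : p ∣ a <;> simp [h]

theorem contract_comm (A : ℕ →₀ ℕ) (p q : ℕ) (hp : p.Prime) (hq : q.Prime) :
    contract (contract A p) q = contract (contract A q) p := by
  by_cases hpq : p = q
  · subst hpq; rfl
  · ext a
    have hp0 := hp.ne_zero
    have hq0 := hq.ne_zero
    simp only [contract_apply _ hp0, contract_apply _ hq0]
    have hcop : Nat.Coprime p q := (Nat.coprime_primes hp hq).2 hpq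
    have h1 : p ∣ q * a ↔ p ∣ a := ⟨fun h => hcop.dvd_of_dvd_mul_left h, fun h => h.mul_left q⟩
    have h2 : q ∣ p * a ↔ q ∣ a := ⟨fun h => hcop.symm.dvd_of_dvd_mul_left h, fun h => h.mul_left p⟩
    have h3 : q * (p * a) = p * (q * a) := by ring
    rw [h3]
    by_cases hpa : p ∣ a <;> by_cases hqa : q ∣ a <;>
      simp [hpa, hqa, h1, h2] <;> ring
end

section
/- Let (A,B) be an instance and X a sum of cycles with L(X) ⊆ L(A,B)∖L(B). Then there exists at most one sum of cycles Y with L(Y) ⊆ L(B) such that A(X+Y) = B. -/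
noncomputable def PhiHom (n : ℕ) : (ℕ →₀ ℕ) →+ ℕ :=
  Finsupp.liftAddHom fun a => if a ∣ n then AddMonoidHom.mulLeft a else 0

lemma phi_apply (n : ℕ) (A : ℕ →₀ ℕ) :
    PhiHom n A = A.sum fun a m => if a ∣ n then a * m else 0 := by
  classical
  rw [PhiHom, Finsupp.liftAddHom_apply]
  refine Finsupp.sum_congr fun a _ => ?_
  by_cases h : a ∣ n <;> simp [h]

lemma phi_smul_single (n c ℓ : ℕ) :
    PhiHom n (c • Finsupp.single ℓ 1) = c * (if ℓ ∣ n then ℓ else 0) := by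
  classical
  rw [map_nsmul, PhiHom, Finsupp.liftAddHom_apply_single]
  by_cases h : ℓ ∣ n <;> simp [h, smul_eq_mul]

lemma phi_mul (n : ℕ) (A X : ℕ →₀ ℕ) :
    PhiHom n (cmul A X) = PhiHom n A * PhiHom n X := by
  classical
  rw [cmul, map_finsuppSum]
  simp_rw [map_finsuppSum, phi_smul_single]
  rw [phi_apply, phi_apply, Finsupp.sum_mul]
  refine Finsupp.sum_congr fun a _ => ?_
  rw [Finsupp.mul_sum]
  refine Finsupp.sum_congr fun x _ => ?_
  by_cases ha : a ∣ n <;> by_cases hx : x ∣ n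
  · have hl : Nat.lcm a x ∣ n := Nat.lcm_dvd ha hx
    simp only [if_pos ha, if_pos hx, if_pos hl]
    rw [mul_assoc, Nat.gcd_mul_lcm]
    ring
  · have hl : ¬ Nat.lcm a x ∣ n := fun h => hx ((Nat.dvd_lcm_right a x).trans h)
    simp [ha, hx, hl]
  · have hl : ¬ Nat.lcm a x ∣ n := fun h => ha ((Nat.dvd_lcm_left a x).trans h)
    simp [ha, hx, hl]
  · have hl : ¬ Nat.lcm a x ∣ n := fun h => ha ((Nat.dvd_lcm_left a x).trans h)
    simp [ha, hx, hl]

lemma phi_divisors (n : ℕ) (hn : n ≠ 0) (A : ℕ →₀ ℕ) :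
    PhiHom n A = ∑ a ∈ n.divisors, a * A a := by
  classical
  rw [phi_apply, Finsupp.sum]
  rw [← Finset.sum_filter]
  apply Finset.sum_subset_zero_on_sdiff
  · intro a ha
    simp only [Finset.mem_filter, Finsupp.mem_support_iff] at ha
    exact Nat.mem_divisors.mpr ⟨ha.2, hn⟩
  · intro a ha
    simp only [Finset.mem_sdiff, Finset.mem_filter, Finsupp.mem_support_iff, not_and,
      Nat.mem_divisors] at ha
    rcases ha with ⟨⟨hd, _⟩, h2⟩
    by_cases h : A a = 0
    · simp [h]
    · exact absurd hd (by simpa [h] using h2)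
  · intro a _; rfl

theorem unique_completion (A B X : ℕ →₀ ℕ) (hA : Pos A) (hB : Pos B) (hX : Pos X)
    (hAne : A ≠ 0) (hBne : B ≠ 0)
    (hLX : ↑X.support ⊆ instSupp A B \ ↑B.support) :
    ∀ Y Y' : ℕ →₀ ℕ, Pos Y → Pos Y' →
      ↑Y.support ⊆ (↑B.support : Set ℕ) → ↑Y'.support ⊆ (↑B.support : Set ℕ) →
      cmul A (X + Y) = B → cmul A (X + Y') = B → Y = Y' := by
  classical
  intro Y Y' hY hY' hYs hY's hEq hEq'
  by_contra hne
  have hex : ∃ n, Y n ≠ Y' n := by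
    by_contra h
    push_neg at h
    exact hne (Finsupp.ext h)
  set n := Nat.find hex with hn_def
  have hn : Y n ≠ Y' n := Nat.find_spec hex
  have hmin : ∀ m < n, Y m = Y' m := fun m hm => not_ne_iff.mp (Nat.find_min hex hm)
  have hnsupp : n ∈ B.support := by
    by_cases hy : Y n = 0
    · have : n ∈ Y'.support := Finsupp.mem_support_iff.mpr (by simpa [hy] using hn.symm)
      exact hY's this
    · exact hYs (Finsupp.mem_support_iff.mpr hy)
  have hnpos : 0 < n := hB n hnsupp
  have hn0 : n ≠ 0 := hnpos.ne'
  have hdiv : ∀ a ∈ n.divisors.erase n, a * Y a = a * Y' a := by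
    intro a ha
    have hd := (Nat.mem_divisors.mp (Finset.mem_of_mem_erase ha)).1
    have hlt : a < n :=
      lt_of_le_of_ne (Nat.le_of_dvd hnpos hd) (Finset.ne_of_mem_erase ha)
    rw [hmin a hlt]
  have hPhiY : PhiHom n Y ≠ PhiHom n Y' := by
    rw [phi_divisors n hn0, phi_divisors n hn0,
      ← Finset.add_sum_erase _ _ (Nat.mem_divisors_self n hn0),
      ← Finset.add_sum_erase _ (fun a => a * Y' a) (Nat.mem_divisors_self n hn0),
      Finset.sum_congr rfl hdiv]
    intro h
    exact hn (Nat.eq_of_mul_eq_mul_left hnpos (add_right_cancel h))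
  have key : ∀ Z : ℕ →₀ ℕ, cmul A (X + Z) = B →
      PhiHom n B = PhiHom n A * (PhiHom n X + PhiHom n Z) := by
    intro Z hZ
    rw [← hZ, phi_mul, map_add]
  have h1 := key Y hEq
  have h2 := key Y' hEq'
  have hA0 : PhiHom n A ≠ 0 := by
    intro h0
    have hz : PhiHom n B = 0 := by rw [h1, h0, zero_mul]
    have hle : n * B n ≤ PhiHom n B := by
      rw [phi_divisors n hn0]
      exact Finset.single_le_sum (f := fun a => a * B a) (fun a _ => Nat.zero_le _)
        (Nat.mem_divisors_self n hn0)
    have hBn : 0 < B n := Nat.pos_of_ne_zero (Finsupp.mem_support_iff.mp hnsupp)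
    have : 0 < n * B n := Nat.mul_pos hnpos hBn
    omega
  have h3 : PhiHom n A * (PhiHom n X + PhiHom n Y)
      = PhiHom n A * (PhiHom n X + PhiHom n Y') := h1 ▸ h2
  exact hPhiY (add_left_cancel (Nat.eq_of_mul_eq_mul_left (Nat.pos_of_ne_zero hA0) h3))
end

section
/- For a consistent instance (A,B), the principal support satisfies L(A,B)∖L(B) = L(A,B)∖Mult(L(B)), where Mult(L(B)) is the set of positive multiples of elements of L(B). Consequently, if 1 ∈ L(B) then L(A,B) ⊆ L(B). -/
theorem principal_support_eq (A B : ℕ →₀ ℕ) (hA : Pos A) (hB : Pos B)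
    (hAne : A ≠ 0) (hBne : B ≠ 0) (hcons : Consistent A B) :
    instSupp A B \ ↑B.support =
      instSupp A B \ {m : ℕ | 0 < m ∧ ∃ b ∈ B.support, b ∣ m} ∧
    (1 ∈ B.support → instSupp A B ⊆ ↑B.support) := by
  have key : ∀ x ∈ instSupp A B, ∀ b ∈ B.support, b ∣ x → x ∈ B.support := by
    intro x hx b hb hbx
    have hb' : b ∈ {ℓ | ∃ a ∈ A.support, ∃ y ∈ instSupp A B, Nat.lcm a y = ℓ} := by
      rw [hcons]; exact hb
    obtain ⟨a, ha, y, hy, hlcm⟩ := hb'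
    have hax : a ∣ x := dvd_trans (hlcm ▸ Nat.dvd_lcm_left a y) hbx
    have h2 := hx.2.2 a ha
    rwa [Nat.dvd_antisymm (Nat.lcm_dvd hax dvd_rfl) (Nat.dvd_lcm_right a x)] at h2
  have h1 : instSupp A B \ ↑B.support =
      instSupp A B \ {m : ℕ | 0 < m ∧ ∃ b ∈ B.support, b ∣ m} := by
    ext x
    simp only [Set.mem_diff, Set.mem_setOf_eq, Finset.mem_coe]
    constructor
    · rintro ⟨hx, hnx⟩
      refine ⟨hx, fun ⟨hpos, b, hb, hbx⟩ => hnx (key x hx b hb hbx)⟩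
    · rintro ⟨hx, hnx⟩
      exact ⟨hx, fun hmem => hnx ⟨hx.1, x, hmem, dvd_refl x⟩⟩
  refine ⟨h1, fun h1B x hx => ?_⟩
  exact key x hx 1 h1B (one_dvd x)
end

section
/- For n ≥ 2, the single cycle C_n is irreducible (as a sum of cycles) if and only if n is a prime power p^α with α ≥ 1. -/
lemma cmul_apply (A B : ℕ →₀ ℕ) (k : ℕ) :
    cmul A B k = ∑ a ∈ A.support, ∑ x ∈ B.support,
      if Nat.lcm a x = k then A a * B x * Nat.gcd a x else 0 := by
  simp only [cmul, Finsupp.sum, Finsupp.finset_sum_apply, Finsupp.smul_apply,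
    Finsupp.single_apply, smul_eq_mul, mul_ite, mul_one, mul_zero]

lemma cmul_single (u v : ℕ) :
    cmul (Cyc u) (Cyc v) = (Nat.gcd u v) • Finsupp.single (Nat.lcm u v) 1 := by
  simp only [cmul, Cyc]
  rw [Finsupp.sum_single_index (by simp), Finsupp.sum_single_index (by simp)]
  simp

lemma pos_cyc (u : ℕ) (hu : 0 < u) : Pos (Cyc u) := by
  intro a ha
  simp only [Cyc, Finsupp.support_single_ne_zero _ one_ne_zero, Finset.mem_singleton] at ha
  omega

lemma cyc_ne (u : ℕ) (hu : u ≠ 1) : Cyc u ≠ Cyc 1 := by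
  simpa [Cyc, Finsupp.single_left_inj (one_ne_zero : (1:ℕ) ≠ 0)] using hu

theorem cyc_irreducible_iff (n : ℕ) (hn : 2 ≤ n) :
    (∀ A B : ℕ →₀ ℕ, Pos A → Pos B → cmul A B = Cyc n → A = Cyc 1 ∨ B = Cyc 1) ↔
      IsPrimePow n := by
  constructor
  · intro hirr
    by_contra hnpp
    set p := n.minFac with hpdef
    have hp : p.Prime := Nat.minFac_prime (by omega)
    set k := n.factorization p with hkdef
    set u := p ^ k with hudef
    set v := n / u with hvdef
    have hu_dvd : u ∣ n := Nat.ordProj_dvd n p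
    have huv : u * v = n := Nat.mul_div_cancel' hu_dvd
    have hcop : Nat.Coprime u v :=
      Nat.Coprime.pow_left k (Nat.coprime_ordCompl hp (show n ≠ 0 by omega))
    have hkpos : 0 < k := by
      rw [hkdef]
      exact Nat.Prime.factorization_pos_of_dvd hp (by omega) (Nat.minFac_dvd n)
    have hu1 : u ≠ 1 := by
      have : 1 < u := Nat.one_lt_pow (by omega) hp.one_lt
      omega
    have hv1 : v ≠ 1 := by
      intro hv
      exact hnpp ⟨p, k, hp.prime, hkpos, by rw [← huv, hv, mul_one]⟩
    have hupos : 0 < u :=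
      Nat.pos_of_ne_zero (fun h0 => by rw [h0, zero_mul] at huv; omega)
    have hvpos : 0 < v :=
      Nat.pos_of_ne_zero (fun h0 => by rw [h0, mul_zero] at huv; omega)
    have hmul : cmul (Cyc u) (Cyc v) = Cyc n := by
      rw [cmul_single, Nat.Coprime.lcm_eq_mul hcop, huv, hcop, one_smul, Cyc]
    rcases hirr (Cyc u) (Cyc v) (pos_cyc u hupos) (pos_cyc v hvpos) hmul with h | h
    · exact cyc_ne u hu1 h
    · exact cyc_ne v hv1 h
  · intro hpp A B hA hB h
    obtain ⟨p, k, hpp', hkpos, rfl⟩ := hpp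
    have hp : p.Prime := hpp'.nat_prime
    set n := p ^ k with hndef
    -- every lcm of support elements equals n
    have key : ∀ a ∈ A.support, ∀ x ∈ B.support, Nat.lcm a x = n := by
      intro a ha x hx
      by_contra hne
      have h0 : cmul A B (Nat.lcm a x) = 0 := by
        rw [h, Cyc, Finsupp.single_apply, if_neg (fun hh => hne hh.symm)]
      rw [cmul_apply, Finset.sum_eq_zero_iff] at h0
      have h1 := h0 a ha
      rw [Finset.sum_eq_zero_iff] at h1
      have h2 := h1 x hx
      rw [if_pos rfl] at h2
      have haa : A a ≠ 0 := Finsupp.mem_support_iff.mp ha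
      have hbb : B x ≠ 0 := Finsupp.mem_support_iff.mp hx
      have hga : 0 < Nat.gcd a x := Nat.gcd_pos_of_pos_left x (hA a ha)
      exact (Nat.mul_ne_zero (Nat.mul_ne_zero haa hbb) (by omega)) h2
    have hS : ∑ a ∈ A.support, ∑ x ∈ B.support, A a * B x * Nat.gcd a x = 1 := by
      have hc : cmul A B n = 1 := by rw [h, Cyc, Finsupp.single_apply, if_pos rfl]
      rw [cmul_apply] at hc
      rw [← hc]
      exact Finset.sum_congr rfl fun a ha => Finset.sum_congr rfl fun x hx =>
        (if_pos (key a ha x hx)).symm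
    have hAne : A.support.Nonempty := by
      rcases A.support.eq_empty_or_nonempty with he | hne
      · rw [he] at hS; simp at hS
      · exact hne
    have hBne : B.support.Nonempty := by
      rcases B.support.eq_empty_or_nonempty with he | hne
      · rw [he] at hS; simp at hS
      · exact hne
    have hge : (∑ a ∈ A.support, A a) * (∑ x ∈ B.support, B x) ≤ 1 := by
      rw [Finset.sum_mul_sum, ← hS]
      refine Finset.sum_le_sum fun a ha => Finset.sum_le_sum fun x hx => ?_
      have hga : 0 < Nat.gcd a x := Nat.gcd_pos_of_pos_left x (hA a ha)
      exact Nat.le_mul_of_pos_right _ hga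
    obtain ⟨a0, ha0⟩ := hAne
    obtain ⟨x0, hx0⟩ := hBne
    have hA1le : 1 ≤ ∑ a ∈ A.support, A a :=
      le_trans (Nat.one_le_iff_ne_zero.mpr (Finsupp.mem_support_iff.mp ha0))
        (Finset.single_le_sum (fun i _ => Nat.zero_le _) ha0)
    have hB1le : 1 ≤ ∑ x ∈ B.support, B x :=
      le_trans (Nat.one_le_iff_ne_zero.mpr (Finsupp.mem_support_iff.mp hx0))
        (Finset.single_le_sum (fun i _ => Nat.zero_le _) hx0)
    have hA1 : ∑ a ∈ A.support, A a = 1 := by nlinarith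
    have hB1 : ∑ x ∈ B.support, B x = 1 := by nlinarith
    have hcardA : A.support = {a0} := by
      have hc : A.support.card = 1 := by
        have h1 : A.support.card • 1 ≤ ∑ a ∈ A.support, A a :=
          Finset.card_nsmul_le_sum _ _ _ fun i hi =>
            Nat.one_le_iff_ne_zero.mpr (Finsupp.mem_support_iff.mp hi)
        have h2 : 1 ≤ A.support.card := Finset.card_pos.mpr ⟨a0, ha0⟩
        simp only [smul_eq_mul, mul_one, hA1] at h1
        omega
      rw [Finset.card_eq_one] at hc
      obtain ⟨b, hb⟩ := hc
      rw [hb] at ha0 ⊢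
      simp_all
    have hcardB : B.support = {x0} := by
      have hc : B.support.card = 1 := by
        have h1 : B.support.card • 1 ≤ ∑ x ∈ B.support, B x :=
          Finset.card_nsmul_le_sum _ _ _ fun i hi =>
            Nat.one_le_iff_ne_zero.mpr (Finsupp.mem_support_iff.mp hi)
        have h2 : 1 ≤ B.support.card := Finset.card_pos.mpr ⟨x0, hx0⟩
        simp only [smul_eq_mul, mul_one, hB1] at h1
        omega
      rw [Finset.card_eq_one] at hc
      obtain ⟨b, hb⟩ := hc
      rw [hb] at hx0 ⊢
      simp_all
    have hAa0 : A a0 = 1 := by rw [hcardA, Finset.sum_singleton] at hA1; exact hA1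
    have hBx0 : B x0 = 1 := by rw [hcardB, Finset.sum_singleton] at hB1; exact hB1
    have hAeq : A = Cyc a0 := by
      ext b
      rw [Cyc, Finsupp.single_apply]
      by_cases hb : a0 = b
      · rw [if_pos hb, ← hb, hAa0]
      · rw [if_neg hb]
        by_contra hne
        have : b ∈ A.support := Finsupp.mem_support_iff.mpr hne
        rw [hcardA, Finset.mem_singleton] at this
        exact hb this.symm
    have hBeq : B = Cyc x0 := by
      ext b
      rw [Cyc, Finsupp.single_apply]
      by_cases hb : x0 = b
      · rw [if_pos hb, ← hb, hBx0]
      · rw [if_neg hb]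
        by_contra hne
        have : b ∈ B.support := Finsupp.mem_support_iff.mpr hne
        rw [hcardB, Finset.mem_singleton] at this
        exact hb this.symm
    have hgcd : Nat.gcd a0 x0 = 1 := by
      rw [hcardA, hcardB, Finset.sum_singleton, Finset.sum_singleton, hAa0, hBx0,
        one_mul, one_mul] at hS
      exact hS
    have hlcm : Nat.lcm a0 x0 = n := key a0 ha0 x0 hx0
    have hmuln : a0 * x0 = n := by
      rw [← Nat.Coprime.lcm_eq_mul hgcd]; exact hlcm
    by_cases hpa : p ∣ a0
    · -- then p ∤ x0, x0 coprime to p^k, x0 ∣ p^k, so x0 = 1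
      right
      have hpx : ¬ p ∣ x0 := fun hpx =>
        Nat.Prime.one_lt hp |>.ne' (Nat.eq_one_of_dvd_one (hgcd ▸ Nat.dvd_gcd hpa hpx)) |>.elim
      have hcop : Nat.Coprime x0 n :=
        (Nat.Coprime.pow_right k ((hp.coprime_iff_not_dvd.mpr hpx).symm))
      have hx0dvd : x0 ∣ n := Dvd.intro_left a0 hmuln
      have : x0 = 1 := Nat.Coprime.eq_one_of_dvd hcop hx0dvd
      rw [hBeq, this]
    · left
      have hcop : Nat.Coprime a0 n :=
        (Nat.Coprime.pow_right k ((hp.coprime_iff_not_dvd.mpr hpa).symm))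
      have ha0dvd : a0 ∣ n := Dvd.intro x0 hmuln
      have : a0 = 1 := Nat.Coprime.eq_one_of_dvd hcop ha0dvd
      rw [hAeq, this]
end

section
/- For every positive integer n, a sum of cycles X satisfies C_n · X = n·C_n if and only if |X| = n and every element of L(X) divides n. Hence the number of solutions of the instance (C_n, nC_n) equals the number of partitions of n whose parts are divisors of n. -/
lemma cmul_cyc (n : ℕ) (X : ℕ →₀ ℕ) :
    cmul (Cyc n) X = X.sum fun x k => (k * Nat.gcd n x) • Finsupp.single (Nat.lcm n x) 1 := by
  unfold cmul Cyc
  rw [Finsupp.sum_single_index] <;> simp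

lemma cmul_cyc_apply (n : ℕ) (X : ℕ →₀ ℕ) (ℓ : ℕ) :
    cmul (Cyc n) X ℓ = ∑ x ∈ X.support, if Nat.lcm n x = ℓ then X x * Nat.gcd n x else 0 := by
  rw [cmul_cyc, Finsupp.sum_apply, Finsupp.sum]
  apply Finset.sum_congr rfl
  intro x hx
  by_cases h : Nat.lcm n x = ℓ <;> simp [Finsupp.single_apply, h]

lemma lcmEqLeftIff (n x : ℕ) : Nat.lcm n x = n ↔ x ∣ n :=
  ⟨fun h => h ▸ Nat.dvd_lcm_right n x,
   fun h => Nat.dvd_antisymm (Nat.lcm_dvd dvd_rfl h) (Nat.dvd_lcm_left n x)⟩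

theorem sol_Cn_nCn (n : ℕ) (hn : 0 < n) :
    (∀ X : ℕ →₀ ℕ, Pos X →
      (cmul (Cyc n) X = n • Cyc n ↔ size X = n ∧ ∀ x ∈ X.support, x ∣ n)) ∧
    {X : ℕ →₀ ℕ | Pos X ∧ cmul (Cyc n) X = n • Cyc n} =
      {X : ℕ →₀ ℕ | Pos X ∧ size X = n ∧ ∀ x ∈ X.support, x ∣ n} := by
  have main : ∀ X : ℕ →₀ ℕ, Pos X →
      (cmul (Cyc n) X = n • Cyc n ↔ size X = n ∧ ∀ x ∈ X.support, x ∣ n) := by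
    intro X hX
    constructor
    · intro h
      have hdvd : ∀ x ∈ X.support, x ∣ n := by
        intro x hx
        rw [← lcmEqLeftIff]
        by_contra hne
        have := DFunLike.congr_fun h (Nat.lcm n x)
        rw [cmul_cyc_apply] at this
        have hr : (n • Cyc n) (Nat.lcm n x) = 0 := by
          simp only [Finsupp.smul_apply, Cyc, Finsupp.single_apply,
            if_neg (fun h' : n = Nat.lcm n x => hne h'.symm), smul_zero]
        rw [hr] at this
        have := (Finset.sum_eq_zero_iff.mp this) x hx
        simp only [if_pos rfl] at this
        rcases Nat.mul_eq_zero.mp this with h1 | h2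
        · exact (Finsupp.mem_support_iff.mp hx) h1
        · exact absurd (Nat.eq_zero_of_gcd_eq_zero_left h2) hn.ne'
      refine ⟨?_, hdvd⟩
      have := DFunLike.congr_fun h n
      rw [cmul_cyc_apply] at this
      have hr : (n • Cyc n) n = n := by simp [Cyc]
      rw [hr] at this
      rw [← this]
      rw [size, Finsupp.sum]
      apply Finset.sum_congr rfl
      intro x hx
      rw [if_pos ((lcmEqLeftIff n x).mpr (hdvd x hx)),
          Nat.gcd_eq_right (hdvd x hx), mul_comm]
    · rintro ⟨hsize, hdvd⟩
      ext ℓ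
      rw [cmul_cyc_apply]
      by_cases hℓ : ℓ = n
      · have hr : (n • Cyc n) ℓ = n := by simp [Cyc, Finsupp.single_apply, hℓ.symm]
        rw [hr]
        have key : ∑ x ∈ X.support, (if Nat.lcm n x = ℓ then X x * Nat.gcd n x else 0)
            = size X := by
          rw [size, Finsupp.sum]
          apply Finset.sum_congr rfl
          intro x hx
          rw [if_pos (hℓ ▸ (lcmEqLeftIff n x).mpr (hdvd x hx)),
              Nat.gcd_eq_right (hdvd x hx), mul_comm]
        rw [key, hsize]
      · have hr : (n • Cyc n) ℓ = 0 := by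
          simp only [Finsupp.smul_apply, Cyc, Finsupp.single_apply,
            if_neg (fun h' : n = ℓ => hℓ h'.symm), smul_zero]
        rw [hr]
        apply Finset.sum_eq_zero
        intro x hx
        rw [if_neg]
        rw [(lcmEqLeftIff n x).mpr (hdvd x hx)]
        exact fun h' => hℓ h'.symm
  refine ⟨main, ?_⟩
  ext X
  simp only [Set.mem_setOf_eq]
  exact ⟨fun ⟨h1, h2⟩ => ⟨h1, (main X h1).mp h2⟩, fun ⟨h1, h2⟩ => ⟨h1, (main X h1).mpr h2⟩⟩
end
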